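/- Let N ≥ 3 be an integer. Let C be the N×N real matrix with entries C_{k,k} = −k(N−k) and C_{k+1,k} = k(N−k) for 1 ≤ k ≤ N−1 and zeros elsewhere, let R be the N×N real matrix with entries R_{k,k} = −(k−1) and R_{k−1,k} = k−1 for 2 ≤ k ≤ N and zeros elsewhere, let w ∈ ℝ^N have entries w_k = (k−1)/(N−1), and let e₁ ∈ ℝ^N be the first standard basis vector. Define, for ρ > 0, E(ρ) := 1 − wᵀ·(ρ·C + R)·(2I − ρ·C − R)⁻¹·e₁, and define the constant c_N := (1/(N−1))·(∑_{k=2}^{N−2} N/(k(N−k)) + (3N−1)/(N−1)). Then, as ρ → ∞, the matrix 2I − ρC − R is eventually invertible and E(ρ) − c_N/ρ = O(ρ⁻²), i.e. the function ρ ↦ E(ρ) − c_N·ρ⁻¹ is big-O of ρ⁻² along the filter at infinity. -/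

import Mathlib

open Matrix Filter Asymptotics Finset

/-- Interaction part `C` of the decomposition `A = λ_r (ρ̃ C + R)` (1-indexed `k = i + 1`). -/
noncomputable def matC (N : ℕ) : Matrix (Fin N) (Fin N) ℝ :=
  Matrix.of fun i j =>
    if i = j then -(((i : ℕ) + 1 : ℝ) * ((N : ℝ) - ((i : ℕ) + 1 : ℝ)))
    else if (i : ℕ) = (j : ℕ) + 1 then ((j : ℕ) + 1 : ℝ) * ((N : ℝ) - ((j : ℕ) + 1 : ℝ))
    else 0

/-- Replacement part `R` of the decomposition `A = λ_r (ρ̃ C + R)` (1-indexed `k = i + 1`). -/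
noncomputable def matR (N : ℕ) : Matrix (Fin N) (Fin N) ℝ :=
  Matrix.of fun i j =>
    if i = j then -((i : ℕ) : ℝ)
    else if (j : ℕ) = (i : ℕ) + 1 then ((j : ℕ) : ℝ)
    else 0

/-!
Write `M = 2 - (ρC + R) = B - ρC` with `B = 2 - R` and `x = M⁻¹ e₁`, so that
`E = 1 - 2 w ⬝ x` because `w₁ = 0`. For every row vector `m`, `m ⬝ e₁ = (mB) ⬝ x - ρ (mC) ⬝ x`.
Since `C` and `R` have zero column sums, `m = 1` gives `1 ⬝ x = 1/2`. The harmonic vector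
`ℓ_k = -H_k/(N-1)` satisfies `ℓC = w - 1`, so `ρ (w ⬝ x - 1/2) = g ⬝ x` with `g = ℓB`. As
`g - g_N 1` vanishes in the last slot it equals `mC` for some `m`, whence
`g ⬝ x = g_N/2 + O(ρ⁻¹)`. Hence `E = -g_N/ρ + O(ρ⁻²)`, and `-g_N = c_N`.

The `O(ρ⁻²)` term is affine in `x`, so it remains to bound `x`. The matrix `ρC + R` is a rate
matrix: nonnegative off the diagonal with zero column sums. Testing against the sign vector
shows `c‖y‖₁ ≤ ‖(c - A) y‖₁` for every rate matrix `A`, so `M` is invertible for `ρ ≥ 0` and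
`‖x‖₁ ≤ 1/2`.
-/

section RateMatrix

variable {ι : Type*} [Fintype ι]

/-- `A i j` is the rate of jumps from `j` to `i`. -/
structure IsRateMatrix (A : Matrix ι ι ℝ) : Prop where
  nonneg_of_ne : ∀ ⦃i j⦄, i ≠ j → 0 ≤ A i j
  one_vecMul_eq_zero : 1 ᵥ* A = 0

namespace IsRateMatrix

variable [DecidableEq ι] {A : Matrix ι ι ℝ}

theorem mul_sum_abs_le (hA : IsRateMatrix A) (c : ℝ) (x : ι → ℝ) :
    c * ∑ i, |x i| ≤ ∑ i, |((c • 1 - A) *ᵥ x) i| := by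
  set s : ι → ℝ := fun i => if 0 ≤ x i then 1 else -1
  have hs_mul (i : ι) : s i * x i = |x i| := by
    by_cases h : 0 ≤ x i <;> simp [s, h, abs_of_nonneg, abs_of_neg, not_le.mp]
  have hs_le (i : ι) (y : ℝ) : s i * y ≤ |y| := by
    by_cases h : 0 ≤ x i
    · simpa [s, h] using le_abs_self y
    · simpa [s, h] using neg_le_abs y
  have hterm (i j : ι) : s i * (A i j * x j) ≤ A i j * |x j| := by
    obtain rfl | hij := eq_or_ne i j
    · rw [← hs_mul, mul_left_comm]
    · rw [mul_left_comm]
      exact mul_le_mul_of_nonneg_left (hs_le i _) (hA.nonneg_of_ne hij)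
  have hcol (j : ι) : ∑ i, A i j = 0 := by
    simpa [vecMul, dotProduct] using congrFun hA.one_vecMul_eq_zero j
  have hAx : ∑ i, s i * (A *ᵥ x) i ≤ 0 := calc
    ∑ i, s i * (A *ᵥ x) i = ∑ i, ∑ j, s i * (A i j * x j) := by
      simp only [mulVec, dotProduct, mul_sum]
    _ ≤ ∑ i, ∑ j, A i j * |x j| := sum_le_sum fun i _ => sum_le_sum fun j _ => hterm i j
    _ = 0 := by simp only [sum_comm (γ := ι), ← sum_mul, hcol, zero_mul, sum_const_zero]
  calc c * ∑ i, |x i| = ∑ i, s i * (c * x i) := by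
        simp only [mul_sum, ← hs_mul, mul_left_comm]
    _ ≤ ∑ i, s i * ((c • 1 - A) *ᵥ x) i := by
        simp only [sub_mulVec, smul_mulVec, one_mulVec, Pi.sub_apply, Pi.smul_apply,
          smul_eq_mul, mul_sub, sum_sub_distrib]
        linarith
    _ ≤ ∑ i, |((c • 1 - A) *ᵥ x) i| := sum_le_sum fun i _ => hs_le i _

theorem isUnit_smul_one_sub (hA : IsRateMatrix A) {c : ℝ} (hc : 0 < c) : IsUnit (c • 1 - A) := by
  refine mulVec_injective_iff_isUnit.1 fun x y hxy => funext fun i => ?_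
  have h := hA.mul_sum_abs_le c (x - y)
  simp only [mulVec_sub, hxy, sub_self, abs_zero, sum_const_zero,
    Pi.sub_apply] at h
  have h0 : ∑ i, |x i - y i| = 0 :=
    le_antisymm (nonpos_of_mul_nonpos_right h hc) (sum_nonneg fun i _ => abs_nonneg _)
  exact sub_eq_zero.1 <| abs_eq_zero.1 <|
    (sum_eq_zero_iff_of_nonneg fun i _ => abs_nonneg _).1 h0 i (mem_univ i)

theorem mulVec_inv_mulVec (hA : IsRateMatrix A) {c : ℝ} (hc : 0 < c) (b : ι → ℝ) :
    (c • 1 - A) *ᵥ ((c • 1 - A)⁻¹ *ᵥ b) = b := by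
  rw [mulVec_mulVec, mul_nonsing_inv _ ((isUnit_iff_isUnit_det _).1 (hA.isUnit_smul_one_sub hc)),
    one_mulVec]

theorem sum_abs_inv_mulVec_le (hA : IsRateMatrix A) {c : ℝ} (hc : 0 < c) (b : ι → ℝ) :
    ∑ i, |((c • 1 - A)⁻¹ *ᵥ b) i| ≤ (∑ i, |b i|) / c := by
  rw [le_div_iff₀' hc]
  have h := hA.mul_sum_abs_le c ((c • 1 - A)⁻¹ *ᵥ b)
  rwa [hA.mulVec_inv_mulVec hc] at h

end IsRateMatrix

end RateMatrix

section DotProduct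

variable {ι : Type*} [Fintype ι]

theorem abs_dotProduct_le (u x : ι → ℝ) : |u ⬝ᵥ x| ≤ (∑ i, |u i|) * ∑ i, |x i| := calc
  |u ⬝ᵥ x| ≤ ∑ i, |u i| * |x i| := by
    simpa only [dotProduct, abs_mul] using abs_sum_le_sum_abs (fun i => u i * x i) univ
  _ ≤ ∑ i, |u i| * ∑ j, |x j| := sum_le_sum fun i _ =>
    mul_le_mul_of_nonneg_left (single_le_sum (fun j _ => abs_nonneg (x j)) (mem_univ i))
      (abs_nonneg _)
  _ = (∑ i, |u i|) * ∑ i, |x i| := (sum_mul ..).symm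

theorem dotProduct_eq_of_vecMul_eq {B C : Matrix ι ι ℝ} {ρ : ℝ} {x b u v : ι → ℝ}
    (hx : (B - ρ • C) *ᵥ x = b) (hu : u ᵥ* C = v) :
    u ⬝ᵥ b = (u ᵥ* B) ⬝ᵥ x - ρ * (v ⬝ᵥ x) := by
  rw [← hx, dotProduct_mulVec, vecMul_sub, vecMul_smul, hu, sub_dotProduct, smul_dotProduct,
    smul_eq_mul]

end DotProduct

theorem sum_Icc_div_mul_sub_eq_harmonic {N : ℕ} (hN : 3 ≤ N) :
    ∑ k ∈ Icc 2 (N - 2), (N : ℝ) / ((k : ℝ) * ((N : ℝ) - (k : ℝ))) =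
      2 * (harmonic (N - 2) : ℝ) - 2 := by
  have hsplit : ∀ k ∈ Icc 2 (N - 2),
      (N : ℝ) / ((k : ℝ) * ((N : ℝ) - (k : ℝ))) = (k : ℝ)⁻¹ + ((N : ℝ) - k)⁻¹ := by
    intro k hk
    have hkN : (k : ℝ) < N := by exact_mod_cast (by grind : k < N)
    have hk0 : (k : ℝ) ≠ 0 := by exact_mod_cast (by grind : k ≠ 0)
    field_simp [hk0, (sub_pos.2 hkN).ne']
    ring
  have hreflect : ∑ k ∈ Icc 2 (N - 2), ((N : ℝ) - k)⁻¹ = ∑ k ∈ Icc 2 (N - 2), (k : ℝ)⁻¹ := by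
    refine sum_nbij' (N - ·) (N - ·) ?_ ?_ ?_ ?_ ?_ <;> intro k hk <;>
      simp only [mem_Icc] at hk ⊢ <;> first | omega | rw [Nat.cast_sub (by omega)]
  have hharmonic : (harmonic (N - 2) : ℝ) = 1 + ∑ k ∈ Icc 2 (N - 2), (k : ℝ)⁻¹ := by
    rw [harmonic_eq_sum_Icc, Rat.cast_sum, Icc_eq_cons_Ioc (by omega), sum_cons,
      ← Icc_add_one_left_eq_Ioc]
    simp
  rw [sum_congr rfl hsplit, sum_add_distrib, hreflect, hharmonic]
  ring

section Gossip

variable {N : ℕ}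

theorem vecMul_matC (f : ℕ → ℝ) (j : Fin N) :
    ((fun i : Fin N => f i) ᵥ* matC N) j =
      ((j : ℝ) + 1) * ((N : ℝ) - ((j : ℝ) + 1)) * (f (j + 1) - f j) := by
  simp only [vecMul, dotProduct, matC, of_apply, Fin.ext_iff]
  rw [Fin.sum_univ_eq_sum_range (fun i => f i *
    if i = (j : ℕ) then -(((i : ℝ) + 1) * (N - ((i : ℝ) + 1)))
    else if i = j + 1 then ((j : ℝ) + 1) * (N - ((j : ℝ) + 1)) else 0) N]
  have hj := j.isLt
  by_cases hlast : (j : ℕ) + 1 = N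
  · have hd : (N : ℝ) - ((j : ℝ) + 1) = 0 := by rw [sub_eq_zero]; exact_mod_cast hlast.symm
    rw [sum_eq_single_of_mem (j : ℕ) (mem_range.2 hj) fun i _ hi => by simp [hi, hd]]
    simp [hd]
  · rw [sum_eq_add_of_mem (j : ℕ) ((j : ℕ) + 1) (mem_range.2 hj) (mem_range.2 (by omega))
      (by omega) fun i _ hi => by simp [hi.1, hi.2]]
    simp
    ring

theorem vecMul_matR (f : ℕ → ℝ) (j : Fin N) :
    ((fun i : Fin N => f i) ᵥ* matR N) j = (j : ℝ) * (f (j - 1) - f j) := by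
  simp only [vecMul, dotProduct, matR, of_apply, Fin.ext_iff]
  rw [Fin.sum_univ_eq_sum_range (fun i => f i * if i = (j : ℕ) then -(i : ℝ)
    else if (j : ℕ) = i + 1 then (j : ℝ) else 0) N]
  have hj := j.isLt
  obtain hj0 | hjpos := Nat.eq_zero_or_pos (j : ℕ)
  · rw [sum_eq_single_of_mem (j : ℕ) (mem_range.2 hj) fun i _ hi => by simp [hi]; omega]
    simp [hj0]
  · rw [sum_eq_add_of_mem (j : ℕ) ((j : ℕ) - 1) (mem_range.2 hj) (mem_range.2 (by omega))
      (by omega) fun i _ hi => by simp [hi.1]; omega]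
    simp [show (j : ℕ) - 1 ≠ j by omega, Nat.sub_add_cancel hjpos]
    ring

theorem one_vecMul_matC : (1 : Fin N → ℝ) ᵥ* matC N = 0 := funext fun j =>
  (vecMul_matC (fun _ => 1) j).trans (by simp)

theorem one_vecMul_matR : (1 : Fin N → ℝ) ᵥ* matR N = 0 := funext fun j =>
  (vecMul_matR (fun _ => 1) j).trans (by simp)

theorem matC_nonneg_of_ne {i j : Fin N} (hij : i ≠ j) : 0 ≤ matC N i j := by
  have hi : ((i : ℕ) : ℝ) + 1 ≤ N := by exact_mod_cast i.isLt
  simp only [matC, of_apply, if_neg hij]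
  split_ifs with h
  · rw [h] at hi
    push_cast at hi
    exact mul_nonneg (by positivity) (by linarith)
  · exact le_rfl

theorem matR_nonneg_of_ne {i j : Fin N} (hij : i ≠ j) : 0 ≤ matR N i j := by
  simp only [matR, of_apply, if_neg hij]
  split_ifs <;> positivity

theorem isRateMatrix_smul_matC_add_matR {ρ : ℝ} (hρ : 0 ≤ ρ) :
    IsRateMatrix (ρ • matC N + matR N) where
  nonneg_of_ne _ _ hij := add_nonneg (mul_nonneg hρ (matC_nonneg_of_ne hij)) (matR_nonneg_of_ne hij)
  one_vecMul_eq_zero := by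
    rw [vecMul_add, vecMul_smul, one_vecMul_matC, one_vecMul_matR, smul_zero, add_zero]

theorem exists_vecMul_matC_eq (g : Fin N → ℝ) (hg : ∀ j : Fin N, (j : ℕ) + 1 = N → g j = 0) :
    ∃ m : Fin N → ℝ, m ᵥ* matC N = g := by
  let G : ℕ → ℝ := fun k => if h : k < N then g ⟨k, h⟩ else 0
  let f : ℕ → ℝ := fun i => ∑ k ∈ range i, G k / (((k : ℝ) + 1) * ((N : ℝ) - ((k : ℝ) + 1)))
  refine ⟨fun i => f i, funext fun j => ?_⟩
  have hstep (k : ℕ) : f (k + 1) - f k = G k / (((k : ℝ) + 1) * ((N : ℝ) - ((k : ℝ) + 1))) := by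
    simp only [f, sum_range_succ, add_sub_cancel_left]
  rw [vecMul_matC, hstep]
  by_cases hlast : (j : ℕ) + 1 = N
  · rw [hg j hlast, sub_eq_zero.2 (by exact_mod_cast hlast.symm), mul_zero, zero_mul]
  · have hd : (N : ℝ) - ((j : ℝ) + 1) ≠ 0 := sub_ne_zero.2 (by exact_mod_cast (Ne.symm hlast))
    rw [mul_div_cancel₀ _ (mul_ne_zero (by positivity) hd)]
    simp [G]

theorem vecMul_matC_harmonic (hN : 2 ≤ N) :
    (fun i : Fin N => -(harmonic i : ℝ) / ((N : ℝ) - 1)) ᵥ* matC N =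
      (fun j : Fin N => ((j : ℕ) : ℝ) / ((N : ℝ) - 1)) - 1 := by
  have hN1 : (N : ℝ) - 1 ≠ 0 := sub_ne_zero.2 (by exact_mod_cast (by omega : N ≠ 1))
  funext j
  rw [Pi.sub_apply, Pi.one_apply, vecMul_matC (fun k => -(harmonic k : ℝ) / ((N : ℝ) - 1)),
    harmonic_succ]
  push_cast
  field_simp
  ring

theorem vecMul_two_smul_one_sub_matR_harmonic_last (hN : 3 ≤ N) :
    ((fun i : Fin N => -(harmonic i : ℝ) / ((N : ℝ) - 1)) ᵥ* ((2 : ℝ) • 1 - matR N))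
        ⟨N - 1, by omega⟩ =
      -(1 / ((N : ℝ) - 1) * (2 * (harmonic (N - 2) : ℝ) - 2 + (3 * N - 1) / ((N : ℝ) - 1))) := by
  have hN1 : (N : ℝ) - 1 ≠ 0 := sub_ne_zero.2 (by exact_mod_cast (by omega : N ≠ 1))
  have hcast : ((N - 1 : ℕ) : ℝ) = N - 1 := by rw [Nat.cast_sub (by omega)]; simp
  have hH : (harmonic (N - 1) : ℝ) = harmonic (N - 2) + 1 / ((N : ℝ) - 1) := by
    rw [show N - 1 = N - 2 + 1 by omega, harmonic_succ, show N - 2 + 1 = N - 1 by omega]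
    push_cast [hcast]
    ring
  rw [vecMul_sub, vecMul_smul, vecMul_one, Pi.sub_apply, Pi.smul_apply, smul_eq_mul,
    vecMul_matR (fun k => -(harmonic k : ℝ) / ((N : ℝ) - 1))]
  simp only [show N - 1 - 1 = N - 2 by omega, hH, hcast]
  field_simp
  ring

theorem exists_remainder_eq [NeZero N] (hN : 3 ≤ N) :
    ∃ (u : Fin N → ℝ) (a : ℝ), ∀ ρ : ℝ, ρ ≠ 0 → ∀ x : Fin N → ℝ,
      ((2 : ℝ) • 1 - (ρ • matC N + matR N)) *ᵥ x = Pi.single 0 1 →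
      1 - (fun k : Fin N => ((k : ℕ) : ℝ) / ((N : ℝ) - 1)) ⬝ᵥ ((ρ • matC N + matR N) *ᵥ x)
        - 1 / ((N : ℝ) - 1) * (2 * (harmonic (N - 2) : ℝ) - 2 + (3 * N - 1) / ((N : ℝ) - 1)) / ρ
        = ρ⁻¹ ^ 2 * (u ⬝ᵥ x + a) := by
  set B : Matrix (Fin N) (Fin N) ℝ := (2 : ℝ) • 1 - matR N
  set w : Fin N → ℝ := fun k => ((k : ℕ) : ℝ) / ((N : ℝ) - 1)
  set ℓ : Fin N → ℝ := fun i => -(harmonic i : ℝ) / ((N : ℝ) - 1)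
  set c : ℝ := 1 / ((N : ℝ) - 1) * (2 * (harmonic (N - 2) : ℝ) - 2 + (3 * N - 1) / ((N : ℝ) - 1))
  set last : Fin N := ⟨N - 1, by omega⟩
  have hone_B : (1 : Fin N → ℝ) ᵥ* B = (2 : ℝ) • 1 := by
    rw [vecMul_sub, vecMul_smul, vecMul_one, one_vecMul_matR, sub_zero]
  have hg_last : (ℓ ᵥ* B) last = -c := vecMul_two_smul_one_sub_matR_harmonic_last hN
  obtain ⟨m, hm⟩ := exists_vecMul_matC_eq (ℓ ᵥ* B - (ℓ ᵥ* B) last • 1) fun j hj => by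
    rw [show j = last from Fin.ext (by simp [last]; omega)]
    simp
  refine ⟨-(2 : ℝ) • (m ᵥ* B), 2 * (m ⬝ᵥ Pi.single 0 1), fun ρ hρ x hx => ?_⟩
  have hAx : (ρ • matC N + matR N) *ᵥ x = (2 : ℝ) • x - Pi.single 0 1 := by
    rw [← hx, sub_mulVec, smul_mulVec, one_mulVec, sub_sub_cancel]
  rw [sub_add_eq_sub_sub_swap] at hx
  change (B - ρ • matC N) *ᵥ x = _ at hx
  have hℓ : ℓ ᵥ* matC N = w - 1 := vecMul_matC_harmonic (by omega)
  have hdot_one := dotProduct_eq_of_vecMul_eq hx one_vecMul_matC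
  have hdot_ℓ := dotProduct_eq_of_vecMul_eq hx hℓ
  have hdot_m := dotProduct_eq_of_vecMul_eq hx hm
  simp only [hAx, hone_B, hg_last, dotProduct_sub, sub_dotProduct, smul_dotProduct,
    dotProduct_smul, dotProduct_single, zero_dotProduct, smul_eq_mul, Pi.one_apply] at hdot_one hdot_ℓ hdot_m ⊢
  have hw0 : w 0 = 0 := by simp [w]
  have hℓ0 : ℓ 0 = 0 := by simp [ℓ]
  rw [hℓ0] at hdot_ℓ
  rw [hw0]
  clear_value c
  field_simp
  linear_combination (-2) * hdot_m - 2 * ρ * hdot_ℓ + (ρ ^ 2 - c * ρ) * hdot_one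

end Gossip

/-- Proposition 8 of the appendix: the asymptotic Gossip bound
`E(ρ) = 1 - wᵀ (ρC + R) (2I - ρC - R)⁻¹ e₁` satisfies
`E(ρ) = c_N/ρ + O(ρ⁻²)` as `ρ → ∞`, where
`c_N = (1/(N-1)) (∑_{k=2}^{N-2} N/(k(N-k)) + (3N-1)/(N-1))`;
moreover `2I - ρC - R` is eventually invertible. -/
theorem gossip_bound_asymptotic_expansion
    (N : ℕ) (hN : 3 ≤ N)
    (w e1 : Fin N → ℝ)
    (hw : ∀ k : Fin N, w k = ((k : ℕ) : ℝ) / ((N : ℝ) - 1))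
    (he1 : ∀ j : Fin N, e1 j = if (j : ℕ) = 0 then 1 else 0)
    (E : ℝ → ℝ)
    (hE : ∀ ρ : ℝ, E ρ = 1 - w ⬝ᵥ ((ρ • matC N + matR N) *ᵥ
      (((2 : ℝ) • (1 : Matrix (Fin N) (Fin N) ℝ) - ρ • matC N - matR N)⁻¹ *ᵥ e1)))
    (cN : ℝ)
    (hcN : cN = (1 / ((N : ℝ) - 1)) *
      ((∑ k ∈ Finset.Icc 2 (N - 2), (N : ℝ) / ((k : ℝ) * ((N : ℝ) - (k : ℝ))))
        + (3 * (N : ℝ) - 1) / ((N : ℝ) - 1))) :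
    (∀ᶠ ρ : ℝ in atTop,
        IsUnit ((2 : ℝ) • (1 : Matrix (Fin N) (Fin N) ℝ) - ρ • matC N - matR N))
      ∧ (fun ρ : ℝ => E ρ - cN / ρ) =O[atTop] fun ρ : ℝ => ρ⁻¹ ^ 2 := by
  have : NeZero N := ⟨by omega⟩
  have he1 : e1 = Pi.single 0 1 := funext fun j => by
    simp only [he1, Pi.single_apply, Fin.ext_iff, Fin.val_zero]
  have he1_abs : ∑ i, |e1 i| = 1 := by simp [he1, Pi.single_apply, apply_ite (|·|)]
  rw [sum_Icc_div_mul_sub_eq_harmonic hN] at hcN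
  simp only [sub_sub] at hE ⊢
  obtain ⟨u, a, hremainder⟩ := exists_remainder_eq hN
  refine ⟨eventually_ge_atTop 0 |>.mono fun ρ hρ =>
    (isRateMatrix_smul_matC_add_matR hρ).isUnit_smul_one_sub two_pos, ?_⟩
  refine IsBigO.of_bound ((∑ i, |u i|) * (1 / 2) + |a|) ?_
  filter_upwards [eventually_gt_atTop 0] with ρ hρ
  have hA := isRateMatrix_smul_matC_add_matR (N := N) hρ.le
  have hx_abs := hA.sum_abs_inv_mulVec_le two_pos e1
  rw [hE, hcN, funext hw, hremainder ρ hρ.ne' _ ((hA.mulVec_inv_mulVec two_pos e1).trans he1),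
    norm_mul, mul_comm]
  refine mul_le_mul_of_nonneg_right ?_ (norm_nonneg _)
  rw [he1_abs] at hx_abs
  calc |u ⬝ᵥ _ + a| ≤ |u ⬝ᵥ _| + |a| := abs_add_le _ _
    _ ≤ (∑ i, |u i|) * (1 / 2) + |a| := by
      gcongr
      exact (abs_dotProduct_le _ _).trans (by gcongr)
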